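/- arXiv:1401.0829 — 2 statements merged into one kernel-verified Lean document; each statement's English description precedes it below -/
import Mathlib

section
/- Let d ≥ 3, W : ℝ^d → [0,∞) continuous and supported in the unit ball, and define the rescaled killing probability u_W^ε(x) = ε^{2−d} u_W(x/ε). Then for all x, z ∈ ℝ^d and ε > 0 with ‖x‖ ≥ max{2‖z‖ + ε, 2ε}, we have |u_W^ε(x+z) − u_W^ε(x)| ≤ 2^{3d−6} ‖z‖ / ‖x‖^{d−1}, uniformly in W. -/
/-!
Put `f = W (1 - u)` and `n = d - 2`, so that `ε^{2-d} u(w/ε) = c₀ ε^{-n} ∫ f(y) ‖w/ε - y‖^{-n} dy`,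
where `f ≥ 0` lives on the unit ball and has mass at most `c₀⁻¹`. For `‖y‖ ≤ 1` the hypothesis
on `‖x‖` keeps `x/ε` at distance `≥ ‖x‖/(2ε)` and `(x+z)/ε` at distance `≥ ‖x‖/(4ε)` from `y`,
while the two distances differ by at most `‖z‖/ε`. The bound
`|a^{-n} - b^{-n}| ≤ n |a - b| / (A B^n)` (for `a ≥ A, B` and `b ≥ B`) then controls the
difference of the kernels uniformly in `y`; integrating against `f`, the mass bound and the
scaling leave `2 n 4^n ‖z‖ / ‖x‖^{n+1} ≤ 2^{3n} ‖z‖ / ‖x‖^{n+1}`.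
-/

open MeasureTheory

theorem abs_inv_pow_sub_inv_pow_le (n : ℕ) {a b A B : ℝ} (hA : 0 < A) (hB : 0 < B)
    (hAa : A ≤ a) (hBa : B ≤ a) (hBb : B ≤ b) :
    |(a ^ n)⁻¹ - (b ^ n)⁻¹| ≤ n * |a - b| / (A * B ^ n) := by
  have ha : 0 < a := hA.trans_le hAa
  have hb : 0 < b := hB.trans_le hBb
  have hinv : |a⁻¹ - b⁻¹| ≤ |a - b| / (A * B) := by
    rw [inv_sub_inv ha.ne' hb.ne', abs_div, abs_sub_comm, abs_of_pos (mul_pos ha hb)]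
    gcongr
  have hmax : max |a⁻¹| |b⁻¹| ≤ B⁻¹ := by
    rw [abs_of_pos (inv_pos.2 ha), abs_of_pos (inv_pos.2 hb)]
    exact max_le (inv_anti₀ hB hBa) (inv_anti₀ hB hBb)
  rcases n with _ | n
  · simp
  calc |(a ^ (n + 1))⁻¹ - (b ^ (n + 1))⁻¹|
      = |a⁻¹ ^ (n + 1) - b⁻¹ ^ (n + 1)| := by rw [inv_pow, inv_pow]
    _ ≤ |a⁻¹ - b⁻¹| * (n + 1 : ℕ) * max |a⁻¹| |b⁻¹| ^ n := abs_pow_sub_pow_le ..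
    _ ≤ |a - b| / (A * B) * (n + 1 : ℕ) * B⁻¹ ^ n := by gcongr
    _ = (n + 1 : ℕ) * |a - b| / (A * B ^ (n + 1)) := by
      rw [inv_pow]
      field_simp
      ring

theorem mul_two_mul_four_pow_le_two_pow_three_mul (n : ℕ) : n * (2 * 4 ^ n) ≤ 2 ^ (3 * n) := by
  have h : 2 * n ≤ 2 ^ n := by
    rcases n with _ | n
    · simp
    · have := Nat.lt_two_pow_self (n := n)
      rw [pow_succ]
      omega
  calc n * (2 * 4 ^ n) = 2 * n * 4 ^ n := by ring
    _ ≤ 2 ^ n * 4 ^ n := by gcongr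
    _ = 2 ^ (3 * n) := by rw [← mul_pow, pow_mul]; norm_num

theorem rpow_two_sub_natCast_add_two {t : ℝ} (ht : 0 ≤ t) (n : ℕ) :
    t ^ ((2 : ℝ) - ((n + 2 : ℕ) : ℝ)) = (t ^ n)⁻¹ := by
  rw [show (2 : ℝ) - ((n + 2 : ℕ) : ℝ) = -(n : ℝ) by push_cast; ring, Real.rpow_neg ht,
    Real.rpow_natCast]

theorem abs_mul_le_one_of_le_inv {c I : ℝ} (hI : 0 ≤ I) (h : I ≤ c⁻¹) : |c| * I ≤ 1 := by
  rcases lt_trichotomy c 0 with hc | rfl | hc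
  · linarith [inv_lt_zero.2 hc]
  · simp
  · rw [abs_of_pos hc]
    calc c * I ≤ c * c⁻¹ := by gcongr
      _ = 1 := mul_inv_cancel₀ hc.ne'

theorem div_le_norm_inv_smul_sub {E : Type*} [NormedAddCommGroup E] [NormedSpace ℝ E]
    {w y : E} {ε r : ℝ} (hε : 0 < ε) (hy : ‖y‖ ≤ 1) (hr : r + ε ≤ ‖w‖) :
    r / ε ≤ ‖ε⁻¹ • w - y‖ := by
  have hw : ‖ε⁻¹ • w‖ = ‖w‖ / ε := by
    rw [norm_smul, norm_inv, Real.norm_of_nonneg hε.le, inv_mul_eq_div]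
  have hrw : r / ε ≤ ‖w‖ / ε - 1 := by
    rw [div_sub_one hε.ne']; gcongr; linarith
  linarith [norm_sub_norm_le (ε⁻¹ • w) y]

section Potential

variable {α : Type*} [MeasurableSpace α] {μ : Measure α} {f a b : α → ℝ} {A B δ : ℝ}

theorem MeasureTheory.Integrable.mul_inv_pow_of_le (hf : Integrable f μ) (ha : Measurable a)
    (hB : 0 < B) (hBa : ∀ y, f y ≠ 0 → B ≤ a y) (n : ℕ) :
    Integrable (fun y => f y * (a y ^ n)⁻¹) μ := by
  refine (hf.norm.const_mul (B ^ n)⁻¹).mono'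
    (hf.1.mul (ha.pow_const n).inv.aestronglyMeasurable) (ae_of_all _ fun y => ?_)
  by_cases hy : f y = 0
  · simp [hy]
  have hay : 0 < a y := hB.trans_le (hBa y hy)
  rw [norm_mul, norm_inv, norm_pow, Real.norm_of_nonneg hay.le, mul_comm]
  gcongr
  exact hBa y hy

theorem abs_integral_mul_inv_pow_sub_le (hf : Integrable f μ) (hf0 : 0 ≤ f)
    (ha : Measurable a) (hb : Measurable b) (hA : 0 < A) (hB : 0 < B)
    (hAa : ∀ y, f y ≠ 0 → A ≤ a y) (hBa : ∀ y, f y ≠ 0 → B ≤ a y)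
    (hBb : ∀ y, f y ≠ 0 → B ≤ b y) (hab : ∀ y, f y ≠ 0 → |a y - b y| ≤ δ) (n : ℕ) :
    |∫ y, f y * (a y ^ n)⁻¹ ∂μ - ∫ y, f y * (b y ^ n)⁻¹ ∂μ|
      ≤ (∫ y, f y ∂μ) * (n * δ / (A * B ^ n)) := by
  have hia := hf.mul_inv_pow_of_le ha hB hBa n
  have hib := hf.mul_inv_pow_of_le hb hB hBb n
  rw [← integral_sub hia hib, ← integral_mul_const]
  refine (abs_integral_le_integral_abs).trans
    (integral_mono (hia.sub hib).abs (hf.mul_const _) fun y => ?_)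
  by_cases hy : f y = 0
  · simp [hy]
  rw [← mul_sub, abs_mul, abs_of_nonneg (hf0 y)]
  refine mul_le_mul_of_nonneg_left ?_ (hf0 y)
  calc _ ≤ n * |a y - b y| / (A * B ^ n) :=
        abs_inv_pow_sub_inv_pow_le n hA hB (hAa y hy) (hBa y hy) (hBb y hy)
    _ ≤ n * δ / (A * B ^ n) := by gcongr; exact hab y hy

end Potential

theorem abs_rescaled_potential_sub_le {E : Type*} [NormedAddCommGroup E] [NormedSpace ℝ E]
    [MeasurableSpace E] [OpensMeasurableSpace E] {μ : Measure E} {f : E → ℝ}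
    (hf : Integrable f μ) (hf0 : 0 ≤ f) (hsupp : ∀ y, f y ≠ 0 → ‖y‖ ≤ 1) (c : ℝ) (n : ℕ)
    {x z : E} {ε : ℝ} (hε : 0 < ε) (hx : max (2 * ‖z‖ + ε) (2 * ε) ≤ ‖x‖) :
    |(ε ^ n)⁻¹ * (c * ∫ y, f y * (‖ε⁻¹ • (x + z) - y‖ ^ n)⁻¹ ∂μ)
        - (ε ^ n)⁻¹ * (c * ∫ y, f y * (‖ε⁻¹ • x - y‖ ^ n)⁻¹ ∂μ)|
      ≤ |c| * (∫ y, f y ∂μ) * (n * (2 * 4 ^ n) * ‖z‖ / ‖x‖ ^ (n + 1)) := by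
  have h2z : 2 * ‖z‖ + ε ≤ ‖x‖ := (le_max_left _ _).trans hx
  have h2ε : 2 * ε ≤ ‖x‖ := (le_max_right _ _).trans hx
  have hxpos : 0 < ‖x‖ := by linarith
  have hxz : ‖x‖ - ‖z‖ ≤ ‖x + z‖ := by simpa using norm_sub_norm_le x (-z)
  have hshift : ∀ y, |‖ε⁻¹ • x - y‖ - ‖ε⁻¹ • (x + z) - y‖| ≤ ‖z‖ / ε := fun y => by
    have := abs_norm_sub_norm_le (ε⁻¹ • x - y) (ε⁻¹ • (x + z) - y)
    rwa [show ε⁻¹ • x - y - (ε⁻¹ • (x + z) - y) = -(ε⁻¹ • z) by module, norm_neg, norm_smul,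
      norm_inv, Real.norm_of_nonneg hε.le, inv_mul_eq_div] at this
  have hkernel := abs_integral_mul_inv_pow_sub_le (μ := μ) (a := fun y => ‖ε⁻¹ • x - y‖)
    (b := fun y => ‖ε⁻¹ • (x + z) - y‖) (A := ‖x‖ / 2 / ε) (B := ‖x‖ / 4 / ε) (δ := ‖z‖ / ε)
    hf hf0 (continuous_const.sub continuous_id).norm.measurable
    (continuous_const.sub continuous_id).norm.measurable (by positivity) (by positivity)
    (fun y hy => div_le_norm_inv_smul_sub hε (hsupp y hy) (by linarith))
    (fun y hy => div_le_norm_inv_smul_sub hε (hsupp y hy) (by linarith))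
    (fun y hy => div_le_norm_inv_smul_sub hε (hsupp y hy) (by linarith))
    (fun y _ => hshift y) n
  have hscale : (ε ^ n)⁻¹ * (n * (‖z‖ / ε) / (‖x‖ / 2 / ε * (‖x‖ / 4 / ε) ^ n))
      = n * (2 * 4 ^ n) * ‖z‖ / ‖x‖ ^ (n + 1) := by
    rw [div_pow, div_pow]
    field_simp
    ring
  rw [← mul_sub, ← mul_sub, abs_mul, abs_mul, abs_of_pos (by positivity), abs_sub_comm, ← hscale]
  grw [hkernel]
  exact le_of_eq (by ring)

section Measurability

variable {E : Type*} [NormedAddCommGroup E] [MeasurableSpace E] [OpensMeasurableSpace E]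
  {μ : Measure E} [NullSingletonClass μ]

theorem aestronglyMeasurable_of_mul_inv_pow_norm_sub {f : E → ℝ} {x : E} {n : ℕ}
    (h : AEStronglyMeasurable (fun y => f y * (‖x - y‖ ^ n)⁻¹) μ) :
    AEStronglyMeasurable f μ := by
  have hpow : Continuous fun y => ‖x - y‖ ^ n := by fun_prop
  refine (h.mul hpow.aestronglyMeasurable).congr ?_
  filter_upwards [μ.ae_ne x] with y hy
  have : ‖x - y‖ ^ n ≠ 0 := pow_ne_zero _ (norm_ne_zero_iff.2 (sub_ne_zero.2 hy.symm))
  simp [this]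

/-- If `W * (1 - u)` were not measurable, none of the integrals in `hrep` would exist, so all of
them would take the junk value `0`; but then `u = 0` and `W * (1 - u) = W` is measurable. -/
theorem aestronglyMeasurable_mul_one_sub_of_eq {W u : E → ℝ} {c : ℝ} {n : ℕ}
    (hW : AEStronglyMeasurable W μ)
    (hrep : ∀ x, u x = c * ∫ y, W y * (1 - u y) * (‖x - y‖ ^ n)⁻¹ ∂μ) :
    AEStronglyMeasurable (fun y => W y * (1 - u y)) μ := by
  by_contra h
  have hu : u = 0 := funext fun x => by
    rw [hrep x, integral_undef fun hi => h (aestronglyMeasurable_of_mul_inv_pow_norm_sub hi.1)]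
    simp
  exact h (by simpa [hu] using hW)

theorem integrable_mul_one_sub_of_eq [ProperSpace E] [IsFiniteMeasureOnCompacts μ]
    {W u : E → ℝ} {c : ℝ} {n : ℕ}
    (hW : Continuous W) (hWsupp : ∀ y, 1 < ‖y‖ → W y = 0) (hu : ∀ y, 0 ≤ u y ∧ u y ≤ 1)
    (hrep : ∀ x, u x = c * ∫ y, W y * (1 - u y) * (‖x - y‖ ^ n)⁻¹ ∂μ) :
    Integrable (fun y => W y * (1 - u y)) μ := by
  have hWint : Integrable W μ := hW.integrable_of_hasCompactSupport <|
    HasCompactSupport.intro (isCompact_closedBall 0 1) fun y hy =>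
      hWsupp y (by simpa using hy)
  refine hWint.norm.mono' (aestronglyMeasurable_mul_one_sub_of_eq hW.aestronglyMeasurable hrep)
    (ae_of_all _ fun y => ?_)
  rw [norm_mul]
  refine mul_le_of_le_one_right (norm_nonneg _) ?_
  rw [Real.norm_eq_abs, abs_le]
  constructor <;> linarith [hu y]

end Measurability

theorem stmt5_general (d : ℕ) (hd : 3 ≤ d)
    (W u : EuclideanSpace ℝ (Fin d) → ℝ) (c₀ : ℝ)
    (hWc : Continuous W) (hW0 : ∀ x, 0 ≤ W x)
    (hWsupp : ∀ x : EuclideanSpace ℝ (Fin d), 1 < ‖x‖ → W x = 0)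
    (hurange : ∀ x, 0 ≤ u x ∧ u x ≤ 1)
    (hrep : ∀ x, u x = c₀ * ∫ y, W y * (1 - u y) * ‖x - y‖ ^ ((2 : ℝ) - d))
    (hmass : (∫ y, W y * (1 - u y)) ≤ c₀⁻¹) :
    ∀ (x z : EuclideanSpace ℝ (Fin d)) (ε : ℝ), 0 < ε →
      max (2 * ‖z‖ + ε) (2 * ε) ≤ ‖x‖ →
      |ε ^ ((2 : ℝ) - d) * u (ε⁻¹ • (x + z)) - ε ^ ((2 : ℝ) - d) * u (ε⁻¹ • x)|
        ≤ (2 : ℝ) ^ (3 * d - 6) * ‖z‖ / ‖x‖ ^ (d - 1) := by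
  obtain ⟨n, rfl⟩ : ∃ n, d = n + 2 := ⟨d - 2, by omega⟩
  intro x z ε hε hx
  simp only [rpow_two_sub_natCast_add_two, norm_nonneg, hε.le] at hrep ⊢
  rw [hrep (ε⁻¹ • (x + z)), hrep (ε⁻¹ • x), show 3 * (n + 2) - 6 = 3 * n by omega,
    show n + 2 - 1 = n + 1 by omega]
  have hf0 : 0 ≤ fun y => W y * (1 - u y) := fun y =>
    mul_nonneg (hW0 y) (by linarith [hurange y])
  have hsupp : ∀ y, W y * (1 - u y) ≠ 0 → ‖y‖ ≤ 1 := fun y hy =>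
    not_lt.1 fun h => hy (by rw [hWsupp y h, zero_mul])
  have hmass' : |c₀| * ∫ y, W y * (1 - u y) ≤ 1 :=
    abs_mul_le_one_of_le_inv (integral_nonneg hf0) hmass
  have hconst : (n : ℝ) * (2 * 4 ^ n) ≤ 2 ^ (3 * n) := by
    exact_mod_cast mul_two_mul_four_pow_le_two_pow_three_mul n
  calc _ ≤ |c₀| * (∫ y, W y * (1 - u y)) * (n * (2 * 4 ^ n) * ‖z‖ / ‖x‖ ^ (n + 1)) :=
        abs_rescaled_potential_sub_le (integrable_mul_one_sub_of_eq hWc hWsupp hurange hrep)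
          hf0 hsupp c₀ n hε hx
    _ ≤ 1 * (2 ^ (3 * n) * ‖z‖ / ‖x‖ ^ (n + 1)) := by gcongr
    _ = _ := one_mul _

/-- Let `d ≥ 3`, `W` continuous nonnegative supported in the unit ball, and
`u = u_W` the killing probability (characterized by its Newtonian potential representation
and mass bound), with rescaling `u_W^ε(x) = ε^{2−d} u_W(x/ε)`. Then for all `x, z, ε > 0`
with `‖x‖ ≥ max{2‖z‖ + ε, 2ε}`,
`|u_W^ε(x+z) − u_W^ε(x)| ≤ 2^{3d−6} ‖z‖ / ‖x‖^{d−1}`, uniformly in `W`. -/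
theorem stmt5 (d : ℕ) (hd : 3 ≤ d)
    (W u : EuclideanSpace ℝ (Fin d) → ℝ) (c₀ : ℝ)
    (hWc : Continuous W) (hW0 : ∀ x, 0 ≤ W x)
    (hWsupp : ∀ x : EuclideanSpace ℝ (Fin d), 1 < ‖x‖ → W x = 0)
    (hurange : ∀ x, 0 ≤ u x ∧ u x ≤ 1)
    (hc₀ : c₀ = ((d : ℝ) * ((d : ℝ) - 1) *
      (volume (Metric.ball (0 : EuclideanSpace ℝ (Fin d)) 1)).toReal)⁻¹)
    (hrep : ∀ x, u x = c₀ * ∫ y, W y * (1 - u y) * ‖x - y‖ ^ ((2 : ℝ) - d))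
    (hmass : (∫ y, W y * (1 - u y)) ≤ c₀⁻¹) :
    ∀ (x z : EuclideanSpace ℝ (Fin d)) (ε : ℝ), 0 < ε →
      max (2 * ‖z‖ + ε) (2 * ε) ≤ ‖x‖ →
      |ε ^ ((2 : ℝ) - d) * u (ε⁻¹ • (x + z)) - ε ^ ((2 : ℝ) - d) * u (ε⁻¹ • x)|
        ≤ (2 : ℝ) ^ (3 * d - 6) * ‖z‖ / ‖x‖ ^ (d - 1) :=
  stmt5_general d hd W u c₀ hWc hW0 hWsupp hurange hrep hmass
end

section
/- Let d ≥ 3, W continuous supported in the unit ball, and u_W^ε(x) = ε^{2−d} u_W(x/ε) the rescaled killing probability. Then for all x, z ∈ ℝ^d and ε > 0 with ‖x‖ ≥ max{2‖z‖ + ε, 2ε}, we have ‖∇u_W^ε(x+z) − ∇u_W^ε(x)‖ ≤ 4^d (2^{d−1} d + 1) ‖z‖ / ‖x‖^d. -/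
open MeasureTheory

/-!
Both gradients are `-(d-2) c₀` times the integral of the density `ρ = W (1 - u) ≥ 0` against the
field `v ↦ v / ‖v‖ ^ d`, evaluated at `x + z - ε y` and at `x - ε y`. For `y` in the unit ball
both points have norm between `‖x‖ / 4` and `2 ‖x‖`, and outside the ball of radius `r` the
field is `(d + 1) / r ^ d`-Lipschitz, so the difference is at most
`(d - 2) c₀ (∫ ρ) (d + 1) 4 ^ d ‖z‖ / ‖x‖ ^ d`, and the mass bound gives `c₀ ∫ ρ ≤ 1`.

Since `u` is not assumed measurable, the integrals may be junk; but the field is bounded above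
and below on the support of `ρ`, so each integrand is integrable exactly when `ρ` is, and
otherwise both integrals vanish.
-/

noncomputable def newtonField {E : Type*} [NormedAddCommGroup E] [NormedSpace ℝ E]
    (d : ℕ) (v : E) : E :=
  (‖v‖ ^ d)⁻¹ • v

lemma inv_pow_sub_inv_pow_mul_le {A B : ℝ} (d : ℕ) (hA : 0 < A) (hAB : A ≤ B) :
    ((A ^ d)⁻¹ - (B ^ d)⁻¹) * A ≤ d * (B - A) / A ^ d := by
  have hB : 0 < B := hA.trans_le hAB
  have bernoulli : 1 - (A / B) ^ d ≤ d * (1 - A / B) := by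
    have h := one_add_mul_le_pow (a := A / B - 1) (by linarith [div_pos hA hB]) d
    rw [add_sub_cancel] at h
    linarith
  calc ((A ^ d)⁻¹ - (B ^ d)⁻¹) * A = (1 - (A / B) ^ d) * A / A ^ d := by
        rw [div_pow]; field_simp
    _ ≤ d * (1 - A / B) * A / A ^ d := by gcongr
    _ = d * (B - A) * (A / B) / A ^ d := by field_simp
    _ ≤ d * (B - A) / A ^ d := by
        gcongr ?_ / _
        exact mul_le_of_le_one_right (mul_nonneg d.cast_nonneg (sub_nonneg.2 hAB))
          ((div_le_one hB).2 hAB)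

section Field

variable {E : Type*} [NormedAddCommGroup E] [NormedSpace ℝ E]

lemma norm_newtonField (d : ℕ) (v : E) : ‖newtonField d v‖ = ‖v‖ / ‖v‖ ^ d := by
  rw [newtonField, norm_smul, norm_inv, norm_pow, norm_norm, inv_mul_eq_div]

lemma norm_newtonField_sub_le (d : ℕ) {a b : E} {r : ℝ} (hr : 0 < r) (ha : r ≤ ‖a‖)
    (hb : r ≤ ‖b‖) :
    ‖newtonField d b - newtonField d a‖ ≤ (d + 1) * ‖b - a‖ / r ^ d := by
  wlog hab : ‖a‖ ≤ ‖b‖ generalizing a b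
  · rw [norm_sub_rev, norm_sub_rev b]
    exact this hb ha (le_of_not_ge hab)
  have hA : 0 < ‖a‖ := hr.trans_le ha
  have split : newtonField d b - newtonField d a
      = (‖b‖ ^ d)⁻¹ • (b - a) - ((‖a‖ ^ d)⁻¹ - (‖b‖ ^ d)⁻¹) • a := by
    simp only [newtonField, smul_sub, sub_smul]
    abel
  have h₁ : ‖(‖b‖ ^ d)⁻¹ • (b - a)‖ ≤ ‖b - a‖ / r ^ d := by
    rw [norm_smul, norm_inv, norm_pow, norm_norm, inv_mul_eq_div]
    gcongr
  have h₂ : ‖((‖a‖ ^ d)⁻¹ - (‖b‖ ^ d)⁻¹) • a‖ ≤ d * ‖b - a‖ / r ^ d := by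
    rw [norm_smul, Real.norm_of_nonneg (sub_nonneg.2 (by gcongr))]
    calc _ ≤ d * (‖b‖ - ‖a‖) / ‖a‖ ^ d := inv_pow_sub_inv_pow_mul_le d hA hab
      _ ≤ d * ‖b - a‖ / r ^ d := by
        gcongr
        exact norm_sub_norm_le b a
  calc ‖newtonField d b - newtonField d a‖
      ≤ ‖(‖b‖ ^ d)⁻¹ • (b - a)‖ + ‖((‖a‖ ^ d)⁻¹ - (‖b‖ ^ d)⁻¹) • a‖ :=
        split ▸ norm_sub_le _ _
    _ ≤ ‖b - a‖ / r ^ d + d * ‖b - a‖ / r ^ d := add_le_add h₁ h₂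
    _ = (d + 1) * ‖b - a‖ / r ^ d := by ring

lemma measurable_newtonField [MeasurableSpace E] [BorelSpace E] (d : ℕ) :
    Measurable (newtonField d : E → E) := by
  unfold newtonField
  fun_prop

lemma norm_add_sub_smul_mem_Icc {x w y : E} {ε : ℝ} (hε : 0 ≤ ε) (hy : ‖y‖ ≤ 1)
    (hw : 2 * ‖w‖ + ε ≤ ‖x‖) (hx : 2 * ε ≤ ‖x‖) :
    ‖x‖ / 4 ≤ ‖x + w - ε • y‖ ∧ ‖x + w - ε • y‖ ≤ 2 * ‖x‖ := by
  have hεy : ‖ε • y‖ ≤ ε := by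
    rw [norm_smul, Real.norm_of_nonneg hε]
    exact mul_le_of_le_one_right hε hy
  have lower : ‖x‖ - (‖ε • y‖ + ‖w‖) ≤ ‖x + w - ε • y‖ := by
    rw [show x + w - ε • y = x - (ε • y - w) by abel]
    exact (sub_le_sub_left (norm_sub_le _ _) _).trans (norm_sub_norm_le _ _)
  have upper : ‖x + w - ε • y‖ ≤ ‖x‖ + ‖w‖ + ‖ε • y‖ := by
    linarith [norm_sub_le (x + w) (ε • y), norm_add_le x w]
  constructor <;> linarith

end Field

section Integral

variable {α : Type*} [MeasurableSpace α] {μ : Measure α}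
  {F : Type*} [NormedAddCommGroup F] [NormedSpace ℝ F]

lemma integrable_smul_iff_of_bounds {ρ : α → ℝ} (hρ : ∀ a, 0 ≤ ρ a) {k : α → F}
    (hk : AEStronglyMeasurable k μ) {δ K : ℝ} (hδ : 0 < δ)
    (hbounds : ∀ a, ρ a ≠ 0 → δ ≤ ‖k a‖ ∧ ‖k a‖ ≤ K) :
    Integrable (fun a => ρ a • k a) μ ↔ Integrable ρ μ := by
  have norm_smul_eq : ∀ a, ‖ρ a • k a‖ = ρ a * ‖k a‖ := fun a => by
    rw [norm_smul, Real.norm_of_nonneg (hρ a)]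
  constructor
  · intro h
    have hρ_eq : ρ = fun a => ‖ρ a • k a‖ * ‖k a‖⁻¹ := by
      funext a
      by_cases ha : ρ a = 0
      · simp [ha]
      · rw [norm_smul_eq, mul_inv_cancel_right₀ (hδ.trans_le (hbounds a ha).1).ne']
    refine (h.norm.const_mul δ⁻¹).mono' ?_ (ae_of_all _ fun a => ?_)
    · rw [hρ_eq]
      exact h.norm.aestronglyMeasurable.mul hk.norm.aemeasurable.inv.aestronglyMeasurable
    · rw [Real.norm_of_nonneg (hρ a), norm_smul_eq]
      by_cases ha : ρ a = 0
      · simp [ha]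
      · calc ρ a = δ⁻¹ * (ρ a * δ) := by field_simp
          _ ≤ δ⁻¹ * (ρ a * ‖k a‖) := by
            have := mul_le_mul_of_nonneg_left (hbounds a ha).1 (hρ a)
            gcongr
  · intro h
    refine (h.mul_const K).mono' (h.aestronglyMeasurable.smul hk) (ae_of_all _ fun a => ?_)
    rw [norm_smul_eq]
    by_cases ha : ρ a = 0
    · simp [ha]
    · exact mul_le_mul_of_nonneg_left (hbounds a ha).2 (hρ a)

variable {E : Type*} [NormedAddCommGroup E] [NormedSpace ℝ E] [MeasurableSpace E] [BorelSpace E]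
  [SecondCountableTopology E]

lemma integrable_smul_newtonField_iff (d : ℕ) {ρ : α → ℝ} (hρ : ∀ a, 0 ≤ ρ a) {g : α → E}
    (hg : Measurable g) {r R : ℝ} (hr : 0 < r) (hrR : r ≤ R)
    (hbounds : ∀ a, ρ a ≠ 0 → r ≤ ‖g a‖ ∧ ‖g a‖ ≤ R) :
    Integrable (fun a => ρ a • newtonField d (g a)) μ ↔ Integrable ρ μ := by
  refine integrable_smul_iff_of_bounds hρ ((measurable_newtonField d).comp hg).aestronglyMeasurable
    (δ := r / R ^ d) (K := R / r ^ d) (by have := hr.trans_le hrR; positivity) fun a ha => ?_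
  obtain ⟨hr_le, hle_R⟩ := hbounds a ha
  have hg_pos : 0 < ‖g a‖ := hr.trans_le hr_le
  have hR : 0 < R := hr.trans_le hrR
  rw [norm_newtonField]
  constructor <;> gcongr

lemma norm_integral_smul_newtonField_sub_le (d : ℕ) {ρ : α → ℝ} (hρ : ∀ a, 0 ≤ ρ a)
    {g₁ g₂ : α → E} (hg₁ : Measurable g₁) (hg₂ : Measurable g₂) {r R δ : ℝ} (hr : 0 < r)
    (hrR : r ≤ R) (hbounds₁ : ∀ a, ρ a ≠ 0 → r ≤ ‖g₁ a‖ ∧ ‖g₁ a‖ ≤ R)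
    (hbounds₂ : ∀ a, ρ a ≠ 0 → r ≤ ‖g₂ a‖ ∧ ‖g₂ a‖ ≤ R) (hδ : ∀ a, ‖g₁ a - g₂ a‖ ≤ δ) :
    ‖∫ a, ρ a • newtonField d (g₁ a) ∂μ - ∫ a, ρ a • newtonField d (g₂ a) ∂μ‖
      ≤ (∫ a, ρ a ∂μ) * ((d + 1) * δ / r ^ d) := by
  have hint₁ := integrable_smul_newtonField_iff (μ := μ) d hρ hg₁ hr hrR hbounds₁
  have hint₂ := integrable_smul_newtonField_iff (μ := μ) d hρ hg₂ hr hrR hbounds₂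
  by_cases hρi : Integrable ρ μ
  · rw [← integral_sub (hint₁.2 hρi) (hint₂.2 hρi), ← integral_mul_const]
    refine norm_integral_le_of_norm_le (hρi.mul_const _) (ae_of_all _ fun a => ?_)
    rw [← smul_sub, norm_smul, Real.norm_of_nonneg (hρ a)]
    by_cases ha : ρ a = 0
    · simp [ha]
    · refine mul_le_mul_of_nonneg_left ?_ (hρ a)
      calc _ ≤ (d + 1) * ‖g₁ a - g₂ a‖ / r ^ d :=
            norm_newtonField_sub_le d hr (hbounds₂ a ha).1 (hbounds₁ a ha).1
        _ ≤ (d + 1) * δ / r ^ d := by gcongr; exact hδ a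
  · rw [integral_undef (mt hint₁.1 hρi), integral_undef (mt hint₂.1 hρi), integral_undef hρi]
    simp

end Integral

lemma sub_two_mul_add_one_le_two_pow (d : ℕ) :
    ((d : ℝ) - 2) * (d + 1) ≤ 2 ^ (d - 1) * d + 1 := by
  have hd : (d : ℝ) ≤ 2 ^ (d - 1) := by
    have := (d - 1).lt_two_pow_self
    exact_mod_cast (show d ≤ 2 ^ (d - 1) by omega)
  nlinarith [(Nat.cast_nonneg d : (0 : ℝ) ≤ d)]

theorem stmt6_general (d : ℕ) (hd : 3 ≤ d)
    (W u : EuclideanSpace ℝ (Fin d) → ℝ) (c₀ : ℝ)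
    (hW0 : ∀ x, 0 ≤ W x)
    (hWsupp : ∀ x : EuclideanSpace ℝ (Fin d), 1 < ‖x‖ → W x = 0)
    (hurange : ∀ x, 0 ≤ u x ∧ u x ≤ 1)
    (hmass : (∫ y, W y * (1 - u y)) ≤ c₀⁻¹)
    (ε : ℝ) (hε : 0 < ε)
    (hgrad : ∀ x : EuclideanSpace ℝ (Fin d),
      gradient (fun y => ε ^ ((2 : ℝ) - d) * u (ε⁻¹ • y)) x
        = (-(((d : ℝ) - 2) * c₀)) •
            ∫ y, (W y * (1 - u y) * (‖x - ε • y‖ ^ d)⁻¹) • (x - ε • y)) :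
    ∀ x z : EuclideanSpace ℝ (Fin d),
      max (2 * ‖z‖ + ε) (2 * ε) ≤ ‖x‖ →
      ‖gradient (fun y => ε ^ ((2 : ℝ) - d) * u (ε⁻¹ • y)) (x + z)
          - gradient (fun y => ε ^ ((2 : ℝ) - d) * u (ε⁻¹ • y)) x‖
        ≤ (4 : ℝ) ^ d * ((2 : ℝ) ^ (d - 1) * d + 1) * ‖z‖ / ‖x‖ ^ d := by
  intro x z hx
  obtain ⟨hxz, hxε⟩ := max_le_iff.mp hx
  have hρ : ∀ y, 0 ≤ W y * (1 - u y) := fun y => mul_nonneg (hW0 y) (sub_nonneg.2 (hurange y).2)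
  have hsupp : ∀ y, W y * (1 - u y) ≠ 0 → ‖y‖ ≤ 1 := fun y hy =>
    not_lt.mp fun h => hy (by rw [hWsupp y h, zero_mul])
  have hc₀ : 0 ≤ c₀ := inv_nonneg.mp ((integral_nonneg hρ).trans hmass)
  have hd₂ : (0 : ℝ) ≤ d - 2 := by
    have : (3 : ℝ) ≤ d := by exact_mod_cast hd
    linarith
  have hfield := norm_integral_smul_newtonField_sub_le d hρ (μ := volume)
    (g₁ := fun y => x + z - ε • y) (g₂ := fun y => x - ε • y) (by fun_prop) (by fun_prop)
    (r := ‖x‖ / 4) (R := 2 * ‖x‖) (by linarith) (by linarith)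
    (fun y hy => norm_add_sub_smul_mem_Icc hε.le (hsupp y hy) hxz hxε)
    (fun y hy => by
      simpa using norm_add_sub_smul_mem_Icc (w := 0) hε.le (hsupp y hy) (by rw [norm_zero]; linarith [norm_nonneg z]) hxε)
    (fun y => (congrArg norm (by abel : x + z - ε • y - (x - ε • y) = z)).le)
  simp only [newtonField, smul_smul] at hfield
  rw [hgrad, hgrad, ← smul_sub, norm_smul, norm_neg, Real.norm_of_nonneg (mul_nonneg hd₂ hc₀)]
  calc ((d : ℝ) - 2) * c₀ * ‖_‖
      ≤ ((d : ℝ) - 2) * c₀ * (c₀⁻¹ * ((d + 1) * ‖z‖ / (‖x‖ / 4) ^ d)) := by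
        gcongr
        exact hfield.trans (by gcongr)
    _ = ((d : ℝ) - 2) * (d + 1) * (4 ^ d * ‖z‖ / ‖x‖ ^ d) * (c₀ * c₀⁻¹) := by
        rw [div_pow]; field_simp
    _ ≤ (2 ^ (d - 1) * d + 1) * (4 ^ d * ‖z‖ / ‖x‖ ^ d) * 1 := by
        gcongr
        · exact sub_two_mul_add_one_le_two_pow d
        · exact mul_inv_le_one
    _ = (4 : ℝ) ^ d * ((2 : ℝ) ^ (d - 1) * d + 1) * ‖z‖ / ‖x‖ ^ d := by ring

/-- Let `d ≥ 3`, `W` continuous nonnegative supported in the unit ball,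
`u = u_W` the killing probability with mass bound `∫ W(1−u) ≤ c₀⁻¹`, and
`u_W^ε(x) = ε^{2−d} u_W(x/ε)` the rescaled killing probability, whose gradient satisfies
`∇u_W^ε(x) = −(d−2) c₀ ∫ W(y)(1−u_W(y)) (x−εy)/‖x−εy‖^d dy`. Then for all `x, z, ε > 0`
with `‖x‖ ≥ max{2‖z‖ + ε, 2ε}`,
`‖∇u_W^ε(x+z) − ∇u_W^ε(x)‖ ≤ 4^d (2^{d−1} d + 1) ‖z‖ / ‖x‖^d`. -/
theorem stmt6 (d : ℕ) (hd : 3 ≤ d)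
    (W u : EuclideanSpace ℝ (Fin d) → ℝ) (c₀ : ℝ)
    (hWc : Continuous W) (hW0 : ∀ x, 0 ≤ W x)
    (hWsupp : ∀ x : EuclideanSpace ℝ (Fin d), 1 < ‖x‖ → W x = 0)
    (hurange : ∀ x, 0 ≤ u x ∧ u x ≤ 1)
    (hc₀ : c₀ = ((d : ℝ) * ((d : ℝ) - 1) *
      (volume (Metric.ball (0 : EuclideanSpace ℝ (Fin d)) 1)).toReal)⁻¹)
    (hmass : (∫ y, W y * (1 - u y)) ≤ c₀⁻¹)
    (ε : ℝ) (hε : 0 < ε)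
    (hgrad : ∀ x : EuclideanSpace ℝ (Fin d),
      gradient (fun y => ε ^ ((2 : ℝ) - d) * u (ε⁻¹ • y)) x
        = (-(((d : ℝ) - 2) * c₀)) •
            ∫ y, (W y * (1 - u y) * (‖x - ε • y‖ ^ d)⁻¹) • (x - ε • y)) :
    ∀ x z : EuclideanSpace ℝ (Fin d),
      max (2 * ‖z‖ + ε) (2 * ε) ≤ ‖x‖ →
      ‖gradient (fun y => ε ^ ((2 : ℝ) - d) * u (ε⁻¹ • y)) (x + z)
          - gradient (fun y => ε ^ ((2 : ℝ) - d) * u (ε⁻¹ • y)) x‖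
        ≤ (4 : ℝ) ^ d * ((2 : ℝ) ^ (d - 1) * d + 1) * ‖z‖ / ‖x‖ ^ d :=
  stmt6_general d hd W u c₀ hW0 hWsupp hurange hmass ε hε hgrad
end
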